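/- arXiv:1412.5581 — 5 statements merged into one kernel-verified Lean document; each statement's English description precedes it below -/
import Mathlib

section
/- The characteristic polynomial of F satisfies det(F − λI) = λ⁴ − 2vλ² − u² for every real λ. -/
open Matrix

section FieldTensor

variable {R : Type*} [CommRing R]

-- The components are 0-indexed: `e 0, e 1, e 2` are the paper's `e₁, e₂, e₃`.
def fieldTensor (e b : Fin 3 → R) : Matrix (Fin 4) (Fin 4) R :=
  !![0, b 2, -b 1, e 0; -b 2, 0, b 0, e 1; b 1, -b 0, 0, e 2; e 0, e 1, e 2, 0]

theorem fieldTensor_sub_smul_one (e b : Fin 3 → R) (l : R) :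
    fieldTensor e b - l • 1 =
      !![-l, b 2, -b 1, e 0; -b 2, -l, b 0, e 1; b 1, -b 0, -l, e 2; e 0, e 1, e 2, -l] := by
  ext i j
  fin_cases i <;> fin_cases j <;> simp [fieldTensor, one_apply]

theorem det_fieldTensor_sub_smul_one (e b : Fin 3 → R) (l : R) :
    (fieldTensor e b - l • 1).det = l ^ 4 - (e ⬝ᵥ e - b ⬝ᵥ b) * l ^ 2 - (e ⬝ᵥ b) ^ 2 := by
  rw [fieldTensor_sub_smul_one, det_succ_row_zero]
  simp [Fin.sum_univ_succ, det_fin_three, Fin.succAbove, dotProduct]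
  ring

end FieldTensor

theorem char_poly_F (e1 e2 e3 b1 b2 b3 u v : ℝ)
    (hu : u = e1 * b1 + e2 * b2 + e3 * b3)
    (hv : v = ((e1 ^ 2 + e2 ^ 2 + e3 ^ 2) - (b1 ^ 2 + b2 ^ 2 + b3 ^ 2)) / 2)
    (F : Matrix (Fin 4) (Fin 4) ℝ)
    (hF : F = !![0, b3, -b2, e1; -b3, 0, b1, e2; b2, -b1, 0, e3; e1, e2, e3, 0]) :
    ∀ l : ℝ, (F - l • (1 : Matrix (Fin 4) (Fin 4) ℝ)).det = l ^ 4 - 2 * v * l ^ 2 - u ^ 2 := by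
  intro l
  have hF' : F = fieldTensor ![e1, e2, e3] ![b1, b2, b3] := hF
  rw [hF', det_fieldTensor_sub_smul_one, vec3_dotProduct', vec3_dotProduct', vec3_dotProduct',
    hu, hv]
  ring
end

section
/- F³ = (σ² − θ²)·F + σθ·F̃. -/
/-!
Direct expansion gives F³ = 2v·F + u·F̃, a polynomial identity in the six field components.
It remains to see that σ² − θ² = 2v and σθ = u: with A = √(u² + v²) ≥ |v| we get σ² = A + v,
θ² = A − v and |σθ| = √(A² − v²) = |u|, and the sign of θ is chosen to match that of u.
-/

lemma fieldMatrix_cube (e1 e2 e3 b1 b2 b3 : ℝ) :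
    !![0, b3, -b2, e1; -b3, 0, b1, e2; b2, -b1, 0, e3; e1, e2, e3, 0] ^ 3 =
      ((e1 ^ 2 + e2 ^ 2 + e3 ^ 2) - (b1 ^ 2 + b2 ^ 2 + b3 ^ 2)) •
          !![0, b3, -b2, e1; -b3, 0, b1, e2; b2, -b1, 0, e3; e1, e2, e3, 0] +
        (e1 * b1 + e2 * b2 + e3 * b3) •
          !![0, -e3, e2, b1; e3, 0, -e1, b2; -e2, e1, 0, b3; b1, b2, b3, 0] := by
  rw [pow_succ, pow_succ, pow_one]
  ext i j
  fin_cases i <;> fin_cases j <;>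
    simp [Matrix.mul_apply, Fin.sum_univ_four] <;> ring

section Invariants

variable (u v : ℝ)

lemma abs_le_sqrt_sq_add_sq : |v| ≤ √(u ^ 2 + v ^ 2) :=
  Real.abs_le_sqrt (by nlinarith)

lemma sqrt_sq_add_sq_add_nonneg : 0 ≤ √(u ^ 2 + v ^ 2) + v := by
  linarith [neg_abs_le v, abs_le_sqrt_sq_add_sq u v]

lemma sqrt_sq_add_sq_sub_nonneg : 0 ≤ √(u ^ 2 + v ^ 2) - v := by
  linarith [le_abs_self v, abs_le_sqrt_sq_add_sq u v]

lemma sq_sqrt_add_sub_sq_sqrt_sub :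
    √(√(u ^ 2 + v ^ 2) + v) ^ 2 - √(√(u ^ 2 + v ^ 2) - v) ^ 2 = 2 * v := by
  rw [Real.sq_sqrt (sqrt_sq_add_sq_add_nonneg u v), Real.sq_sqrt (sqrt_sq_add_sq_sub_nonneg u v)]
  ring

lemma sqrt_add_mul_sqrt_sub :
    √(√(u ^ 2 + v ^ 2) + v) * √(√(u ^ 2 + v ^ 2) - v) = |u| := by
  have hA : √(u ^ 2 + v ^ 2) ^ 2 = u ^ 2 + v ^ 2 := Real.sq_sqrt (by positivity)
  have hprod : (√(u ^ 2 + v ^ 2) + v) * (√(u ^ 2 + v ^ 2) - v) = u ^ 2 := by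
    linear_combination hA
  rw [← Real.sqrt_mul (sqrt_sq_add_sq_add_nonneg u v), hprod, Real.sqrt_sq_eq_abs]

end Invariants

lemma ite_neg_one_one_mul_abs (u : ℝ) : (if u < 0 then (-1 : ℝ) else 1) * |u| = u := by
  split_ifs with h
  · rw [abs_of_neg h]; ring
  · rw [abs_of_nonneg (not_lt.mp h), one_mul]

lemma ite_neg_one_one_sq (u : ℝ) : (if u < 0 then (-1 : ℝ) else 1) ^ 2 = 1 := by
  split_ifs <;> norm_num

theorem Fcubed
(e1 e2 e3 b1 b2 b3 u v σ θ : ℝ)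
    (hu : u = e1 * b1 + e2 * b2 + e3 * b3)
    (hv : v = ((e1 ^ 2 + e2 ^ 2 + e3 ^ 2) - (b1 ^ 2 + b2 ^ 2 + b3 ^ 2)) / 2)
    (hσ : σ = Real.sqrt (Real.sqrt (u ^ 2 + v ^ 2) + v))
    (hθ : θ = (if u < 0 then (-1 : ℝ) else 1) * Real.sqrt (Real.sqrt (u ^ 2 + v ^ 2) - v))
    (F Ft : Matrix (Fin 4) (Fin 4) ℝ)
    (hF : F = !![0, b3, -b2, e1; -b3, 0, b1, e2; b2, -b1, 0, e3; e1, e2, e3, 0])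
    (hFt : Ft = !![0, -e3, e2, b1; e3, 0, -e1, b2; -e2, e1, 0, b3; b1, b2, b3, 0])
    :
    F ^ 3 = (σ ^ 2 - θ ^ 2) • F + (σ * θ) • Ft := by
  have hdiff : σ ^ 2 - θ ^ 2 = 2 * v := by
    rw [hσ, hθ, mul_pow, ite_neg_one_one_sq, one_mul, sq_sqrt_add_sub_sq_sqrt_sub]
  have hprod : σ * θ = u := by
    rw [hσ, hθ, mul_left_comm, sqrt_add_mul_sqrt_sub, ite_neg_one_one_mul_abs]
  rw [hdiff, hprod, hF, hFt, fieldMatrix_cube, hu, hv]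
  congr 2
  ring
end

section
/- F·T = (σ² − θ²)·F + 2σθ·F̃, where T = F² + F̃². -/
/-!
Writing `F̃` as the field matrix of the dual field `(b, -e)`, a direct computation gives
`F F̃ = (e·b) 1` and `F² - F̃² = (|e|² - |b|²) 1 = 2v 1`. From these two relations alone,
`F F̃² = (e·b) F̃` and `F³ = 2v F + (e·b) F̃`, so `F T = 2v F + 2(e·b) F̃`. Finally `σ + iθ` is a
square root of `2(v + iu)`, i.e. `σ² - θ² = 2v` and `σθ = u`.
-/

theorem mul_sq_add_sq_of_sq_sub_sq_eq_smul_one {R A : Type*} [CommRing R] [Ring A] [Algebra R A]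
    {F G : A} {α β : R} (hsq : F ^ 2 - G ^ 2 = α • 1) (hmul : F * G = β • 1) :
    F * (F ^ 2 + G ^ 2) = α • F + (2 * β) • G := by
  have hFGG : F * G ^ 2 = β • G := by rw [sq, ← mul_assoc, hmul, smul_one_mul]
  have hFFF : F * F ^ 2 = α • F + β • G := by
    rw [sub_eq_iff_eq_add.mp hsq, mul_add, mul_smul_one, hFGG, add_comm]
  rw [mul_add, hFFF, hFGG, two_mul, add_smul]
  abel

def fieldMatrix {R : Type*} [Ring R] (e1 e2 e3 b1 b2 b3 : R) : Matrix (Fin 4) (Fin 4) R :=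
  !![0, b3, -b2, e1; -b3, 0, b1, e2; b2, -b1, 0, e3; e1, e2, e3, 0]

section FieldMatrix

variable {R : Type*} [CommRing R] (e1 e2 e3 b1 b2 b3 : R)

theorem fieldMatrix_mul_dual :
    fieldMatrix e1 e2 e3 b1 b2 b3 * fieldMatrix b1 b2 b3 (-e1) (-e2) (-e3)
      = (e1 * b1 + e2 * b2 + e3 * b3) • 1 := by
  ext i j
  fin_cases i <;> fin_cases j <;> simp [fieldMatrix] <;> ring

theorem fieldMatrix_sq_sub_dual_sq :
    fieldMatrix e1 e2 e3 b1 b2 b3 ^ 2 - fieldMatrix b1 b2 b3 (-e1) (-e2) (-e3) ^ 2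
      = ((e1 ^ 2 + e2 ^ 2 + e3 ^ 2) - (b1 ^ 2 + b2 ^ 2 + b3 ^ 2)) • 1 := by
  ext i j
  fin_cases i <;> fin_cases j <;> simp [sq, fieldMatrix] <;> ring

end FieldMatrix

namespace Real

variable (u v : ℝ)

theorem abs_le_sqrt_sq_add_sq : |v| ≤ √(u ^ 2 + v ^ 2) :=
  abs_le_sqrt (by nlinarith [sq_nonneg u])

theorem sq_sqrt_sqrt_sq_add_sq_add : √(√(u ^ 2 + v ^ 2) + v) ^ 2 = √(u ^ 2 + v ^ 2) + v :=
  sq_sqrt (by linarith [neg_abs_le v, abs_le_sqrt_sq_add_sq u v])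

theorem sq_sqrt_sqrt_sq_add_sq_sub : √(√(u ^ 2 + v ^ 2) - v) ^ 2 = √(u ^ 2 + v ^ 2) - v :=
  sq_sqrt (by linarith [le_abs_self v, abs_le_sqrt_sq_add_sq u v])

theorem sqrt_sqrt_sq_add_sq_add_mul_sqrt_sub :
    √(√(u ^ 2 + v ^ 2) + v) * √(√(u ^ 2 + v ^ 2) - v) = |u| := by
  rw [← sqrt_sq_eq_abs, ← sq_eq_sq₀ (by positivity) (sqrt_nonneg _), mul_pow,
    sq_sqrt_sqrt_sq_add_sq_add, sq_sqrt_sqrt_sq_add_sq_sub, sq_sqrt (sq_nonneg u)]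
  linear_combination sq_sqrt (by positivity : 0 ≤ u ^ 2 + v ^ 2)

end Real

section SquareRoot

variable {u v σ θ : ℝ}

theorem sq_sub_sq_eq_of_eq_sqrt (hσ : σ = √(√(u ^ 2 + v ^ 2) + v))
    (hθ : θ = (if u < 0 then (-1 : ℝ) else 1) * √(√(u ^ 2 + v ^ 2) - v)) :
    σ ^ 2 - θ ^ 2 = 2 * v := by
  have hsign : (if u < 0 then (-1 : ℝ) else 1) ^ 2 = 1 := by split_ifs <;> norm_num
  rw [hσ, hθ, mul_pow, hsign, one_mul, Real.sq_sqrt_sqrt_sq_add_sq_add,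
    Real.sq_sqrt_sqrt_sq_add_sq_sub]
  ring

theorem mul_eq_of_eq_sqrt (hσ : σ = √(√(u ^ 2 + v ^ 2) + v))
    (hθ : θ = (if u < 0 then (-1 : ℝ) else 1) * √(√(u ^ 2 + v ^ 2) - v)) :
    σ * θ = u := by
  rw [hσ, hθ, mul_left_comm, Real.sqrt_sqrt_sq_add_sq_add_mul_sqrt_sub]
  split_ifs with hu
  · rw [abs_of_neg hu, neg_one_mul, neg_neg]
  · rw [abs_of_nonneg (not_lt.mp hu), one_mul]

end SquareRoot

theorem F_mul_T
(e1 e2 e3 b1 b2 b3 u v σ θ : ℝ)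
    (hu : u = e1 * b1 + e2 * b2 + e3 * b3)
    (hv : v = ((e1 ^ 2 + e2 ^ 2 + e3 ^ 2) - (b1 ^ 2 + b2 ^ 2 + b3 ^ 2)) / 2)
    (hσ : σ = Real.sqrt (Real.sqrt (u ^ 2 + v ^ 2) + v))
    (hθ : θ = (if u < 0 then (-1 : ℝ) else 1) * Real.sqrt (Real.sqrt (u ^ 2 + v ^ 2) - v))
    (F Ft : Matrix (Fin 4) (Fin 4) ℝ)
    (hF : F = !![0, b3, -b2, e1; -b3, 0, b1, e2; b2, -b1, 0, e3; e1, e2, e3, 0])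
    (hFt : Ft = !![0, -e3, e2, b1; e3, 0, -e1, b2; -e2, e1, 0, b3; b1, b2, b3, 0])
    (T : Matrix (Fin 4) (Fin 4) ℝ) (hT : T = F ^ 2 + Ft ^ 2) :
    F * T = (σ ^ 2 - θ ^ 2) • F + (2 * σ * θ) • Ft := by
  have hF' : F = fieldMatrix e1 e2 e3 b1 b2 b3 := hF
  have hFt' : Ft = fieldMatrix b1 b2 b3 (-e1) (-e2) (-e3) := by
    rw [hFt, fieldMatrix]
    simp only [neg_neg]
  have hα : (e1 ^ 2 + e2 ^ 2 + e3 ^ 2) - (b1 ^ 2 + b2 ^ 2 + b3 ^ 2) = 2 * v := by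
    rw [hv]
    ring
  rw [hT, hF', hFt', mul_sq_add_sq_of_sq_sub_sq_eq_smul_one (fieldMatrix_sq_sub_dual_sq ..)
    (fieldMatrix_mul_dual ..), hα, ← hu, sq_sub_sq_eq_of_eq_sqrt hσ hθ, mul_assoc,
    mul_eq_of_eq_sqrt hσ hθ]
end

section
/- If σ = 0 and θ = 0 (equivalently u = 0 and v = 0, i.e. e·b = 0 and |e| = |b|), then for every real t, exp(tF) = I + t·F + (t²/2)·F², where exp denotes the matrix exponential. -/
/-! A direct computation gives `F³ = 2v • F + u • ⋆F`, where `⋆F` is the dual matrix obtained from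
`F` by `(e, b) ↦ (b, -e)`. Since `σ = θ = 0` forces `u = v = 0`, the matrix `t • F` is nilpotent of
order three, so the exponential series stops after its quadratic term. -/

namespace NormedSpace

open Finset Nat

variable (𝕂 : Type*) {𝔸 : Type*} [Field 𝕂] [CharZero 𝕂] [Ring 𝔸] [Algebra 𝕂 𝔸]
  [TopologicalSpace 𝔸] [IsTopologicalRing 𝔸] {x : 𝔸}

theorem exp_eq_sum_of_pow_eq_zero {k : ℕ} (hx : x ^ k = 0) :
    exp x = ∑ n ∈ range k, (n !⁻¹ : 𝕂) • x ^ n := by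
  rw [exp_eq_tsum 𝕂]
  exact tsum_eq_sum fun n hn => by
    rw [pow_eq_zero_of_le (by simpa using hn) hx, smul_zero]

theorem exp_eq_of_pow_three_eq_zero (hx : x ^ 3 = 0) : exp x = 1 + x + (2⁻¹ : 𝕂) • x ^ 2 := by
  simp [exp_eq_sum_of_pow_eq_zero 𝕂 hx, sum_range_succ]

end NormedSpace

theorem fieldMatrix_pow_three {R : Type*} [CommRing R] (e1 e2 e3 b1 b2 b3 : R) :
    fieldMatrix e1 e2 e3 b1 b2 b3 ^ 3 =
      (e1 ^ 2 + e2 ^ 2 + e3 ^ 2 - (b1 ^ 2 + b2 ^ 2 + b3 ^ 2)) • fieldMatrix e1 e2 e3 b1 b2 b3 +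
        (e1 * b1 + e2 * b2 + e3 * b3) • fieldMatrix b1 b2 b3 (-e1) (-e2) (-e3) := by
  ext i j
  fin_cases i <;> fin_cases j <;>
    simp [fieldMatrix, pow_succ, Matrix.mul_apply, Fin.sum_univ_four] <;> ring

theorem fieldMatrix_pow_three_eq_zero {R : Type*} [CommRing R] {e1 e2 e3 b1 b2 b3 : R}
    (hu : e1 * b1 + e2 * b2 + e3 * b3 = 0)
    (hv : e1 ^ 2 + e2 ^ 2 + e3 ^ 2 = b1 ^ 2 + b2 ^ 2 + b3 ^ 2) :
    fieldMatrix e1 e2 e3 b1 b2 b3 ^ 3 = 0 := by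
  rw [fieldMatrix_pow_three, hu, hv, sub_self, zero_smul, zero_smul, add_zero]

theorem Real.eq_zero_and_eq_zero_of_sqrt_sqrt_add_sub_eq_zero {u v : ℝ}
    (hadd : √(√(u ^ 2 + v ^ 2) + v) = 0) (hsub : √(√(u ^ 2 + v ^ 2) - v) = 0) :
    u = 0 ∧ v = 0 := by
  have hadd' := Real.sqrt_eq_zero'.mp hadd
  have hsub' := Real.sqrt_eq_zero'.mp hsub
  have hnorm : u ^ 2 + v ^ 2 ≤ 0 :=
    Real.sqrt_eq_zero'.mp (le_antisymm (by linarith) (Real.sqrt_nonneg _))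
  constructor <;> nlinarith [sq_nonneg u, sq_nonneg v]

theorem exp_tF_nilpotent_case
    (e1 e2 e3 b1 b2 b3 u v σ θ : ℝ)
    (hu : u = e1 * b1 + e2 * b2 + e3 * b3)
    (hv : v = ((e1 ^ 2 + e2 ^ 2 + e3 ^ 2) - (b1 ^ 2 + b2 ^ 2 + b3 ^ 2)) / 2)
    (hσ : σ = Real.sqrt (Real.sqrt (u ^ 2 + v ^ 2) + v))
    (hθ : θ = (if u < 0 then (-1 : ℝ) else 1) * Real.sqrt (Real.sqrt (u ^ 2 + v ^ 2) - v))
    (F : Matrix (Fin 4) (Fin 4) ℝ)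
    (hF : F = !![0, b3, -b2, e1; -b3, 0, b1, e2; b2, -b1, 0, e3; e1, e2, e3, 0])
    (hσ0 : σ = 0) (hθ0 : θ = 0) :
    ∀ t : ℝ, NormedSpace.exp (t • F) =
      1 + t • F + (t ^ 2 / 2) • (F ^ 2) := by
  intro t
  have hsub : √(√(u ^ 2 + v ^ 2) - v) = 0 := by
    rw [hθ0] at hθ
    split_ifs at hθ <;> linarith
  obtain ⟨hu0, hv0⟩ := Real.eq_zero_and_eq_zero_of_sqrt_sqrt_add_sub_eq_zero (hσ0 ▸ hσ).symm hsub
  have hF3 : F ^ 3 = 0 := hF ▸ fieldMatrix_pow_three_eq_zero (hu0 ▸ hu).symm (by linarith)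
  rw [NormedSpace.exp_eq_of_pow_three_eq_zero ℝ (by rw [smul_pow, hF3, smul_zero]),
    smul_pow, smul_smul, div_eq_inv_mul]
end

section
/- If u = 0 and v = 0 (i.e. e·b = 0 and |e| = |b|), then F·T = 0, T² = 0, and F² = T/2, where T = F² + F̃². -/
/-!
`F` is the electromagnetic field tensor and `F̃` its dual. Direct computation gives
`F F̃ = (e·b) 1` and `F² - F̃² = (|e|² - |b|²) 1`, so in the null case `F F̃ = 0` and `F² = F̃²`.
Then `F³ = F F̃² = (F F̃) F̃ = 0`, and `T = 2 F²` inherits `F T = 2 F³ = 0` and `T² = 4 F⁴ = 0`.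
-/

def faraday (e1 e2 e3 b1 b2 b3 : ℝ) : Matrix (Fin 4) (Fin 4) ℝ :=
  !![0, b3, -b2, e1; -b3, 0, b1, e2; b2, -b1, 0, e3; e1, e2, e3, 0]

def faradayDual (e1 e2 e3 b1 b2 b3 : ℝ) : Matrix (Fin 4) (Fin 4) ℝ :=
  !![0, -e3, e2, b1; e3, 0, -e1, b2; -e2, e1, 0, b3; b1, b2, b3, 0]

section Faraday

variable (e1 e2 e3 b1 b2 b3 : ℝ)

theorem faraday_mul_faradayDual :
    faraday e1 e2 e3 b1 b2 b3 * faradayDual e1 e2 e3 b1 b2 b3 =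
      (e1 * b1 + e2 * b2 + e3 * b3) • (1 : Matrix (Fin 4) (Fin 4) ℝ) := by
  ext i j
  fin_cases i <;> fin_cases j <;>
    simp [faraday, faradayDual, Matrix.mul_apply, Fin.sum_univ_four] <;> ring

theorem faraday_sq_sub_faradayDual_sq :
    faraday e1 e2 e3 b1 b2 b3 ^ 2 - faradayDual e1 e2 e3 b1 b2 b3 ^ 2 =
      ((e1 ^ 2 + e2 ^ 2 + e3 ^ 2) - (b1 ^ 2 + b2 ^ 2 + b3 ^ 2)) •
        (1 : Matrix (Fin 4) (Fin 4) ℝ) := by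
  ext i j
  fin_cases i <;> fin_cases j <;>
    simp [faraday, faradayDual, sq] <;> ring

end Faraday

section NullPair

variable {R : Type*} [Semiring R] {a b : R}

theorem pow_three_eq_zero_of_mul_eq_zero_of_sq_eq_sq (hab : a * b = 0) (h : a ^ 2 = b ^ 2) :
    a ^ 3 = 0 := by
  rw [pow_succ', h, sq, ← mul_assoc, hab, zero_mul]

theorem null_pair_identities [Module ℝ R] (hab : a * b = 0) (h : a ^ 2 = b ^ 2) :
    a * (a ^ 2 + b ^ 2) = 0 ∧ (a ^ 2 + b ^ 2) ^ 2 = 0 ∧ a ^ 2 = (1 / 2 : ℝ) • (a ^ 2 + b ^ 2) := by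
  have ha3 := pow_three_eq_zero_of_mul_eq_zero_of_sq_eq_sq hab h
  rw [← h]
  refine ⟨?_, ?_, ?_⟩
  · rw [mul_add, ← pow_succ', ha3, add_zero]
  · rw [sq (a ^ 2 + a ^ 2), add_mul, mul_add, ← pow_add, show 2 + 2 = 1 + 3 from rfl,
      pow_add, ha3, mul_zero, add_zero, add_zero]
  · rw [← two_smul ℝ, smul_smul]
    norm_num

end NullPair

theorem nilpotent_case_identities
    (e1 e2 e3 b1 b2 b3 u v : ℝ)
    (hu : u = e1 * b1 + e2 * b2 + e3 * b3)
    (hv : v = ((e1 ^ 2 + e2 ^ 2 + e3 ^ 2) - (b1 ^ 2 + b2 ^ 2 + b3 ^ 2)) / 2)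
    (F Ft : Matrix (Fin 4) (Fin 4) ℝ)
    (hF : F = !![0, b3, -b2, e1; -b3, 0, b1, e2; b2, -b1, 0, e3; e1, e2, e3, 0])
    (hFt : Ft = !![0, -e3, e2, b1; e3, 0, -e1, b2; -e2, e1, 0, b3; b1, b2, b3, 0])
    (T : Matrix (Fin 4) (Fin 4) ℝ) (hT : T = F ^ 2 + Ft ^ 2)
    (hu0 : u = 0) (hv0 : v = 0) :
    F * T = 0 ∧ T ^ 2 = 0 ∧ F ^ 2 = (1 / 2 : ℝ) • T := by
  have hdot : e1 * b1 + e2 * b2 + e3 * b3 = 0 := hu.symm.trans hu0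
  have hnorm : (e1 ^ 2 + e2 ^ 2 + e3 ^ 2) - (b1 ^ 2 + b2 ^ 2 + b3 ^ 2) = 0 := by linarith
  have hF' : F = faraday e1 e2 e3 b1 b2 b3 := hF
  have hFt' : Ft = faradayDual e1 e2 e3 b1 b2 b3 := hFt
  subst hF' hFt' hT
  refine null_pair_identities ?_ (sub_eq_zero.mp ?_)
  · rw [faraday_mul_faradayDual, hdot, zero_smul]
  · rw [faraday_sq_sub_faradayDual_sq, hnorm, zero_smul]
end
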